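/- arXiv:1703.07888 — 3 statements merged into one kernel-verified Lean document; each statement's English description precedes it below -/
import Mathlib

section
/- Let p be a prime, and 0 → ℤ_p^a →(i) G →(π) H → 0 an exact sequence of ℤ_p-modules with H finitely generated and annihilated by p^n. Define g : H → ℤ_p^a/p^n ℤ_p^a by g(π(x)) = p^n x mod p^n ℤ_p^a. Then G is isomorphic as a ℤ_p-module to ℤ_p^a ⊕ ker(g). -/
/-!
Since `p^n • G ⊆ i(ℤ_p^a)`, there is `f : G → ℤ_p^a` with `i ∘ f = p^n`. Its image contains
`p^n ℤ_p^a`, so it is a full-rank submodule of `ℤ_p^a`, hence free of rank `a`, and `f` splits: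
`G ≅ ker f ⊕ im f`. Finally `g ∘ π` is `f` followed by reduction mod `p^n`, and `π` restricts to
an isomorphism `ker f ≅ ker g`; injectivity uses that `ℤ_p^a` has no `p`-torsion.
-/
theorem LinearMap.exists_comp_eq_of_range_le {R F G M : Type*} [Ring R]
    [AddCommGroup F] [Module R F] [AddCommGroup G] [Module R G] [AddCommGroup M] [Module R M]
    {i : F →ₗ[R] G} (hi : Function.Injective i) (φ : M →ₗ[R] G) (h : range φ ≤ range i) :
    ∃ f : M →ₗ[R] F, i ∘ₗ f = φ :=
  ⟨(LinearEquiv.ofInjective i hi).symm ∘ₗ φ.codRestrict _ fun x ↦ h ⟨x, rfl⟩, by ext; simp⟩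

theorem LinearMap.nonempty_equiv_ker_prod_range {R G M : Type*} [Ring R]
    [AddCommGroup G] [Module R G] [AddCommGroup M] [Module R M]
    (f : G →ₗ[R] M) [Module.Projective R (range f)] :
    Nonempty (G ≃ₗ[R] ker f × range f) := by
  obtain ⟨s, hs⟩ := f.rangeRestrict.exists_rightInverse_of_surjective f.range_rangeRestrict
  have hexact := f.rangeRestrict.exact_subtype_ker_map
  rw [ker_rangeRestrict] at hexact
  exact ⟨(hexact.splitSurjectiveEquiv (ker f).injective_subtype ⟨s, hs⟩).1⟩

theorem Submodule.nonempty_linearEquiv_of_smul_mem {R M : Type*} [CommRing R] [IsDomain R]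
    [IsPrincipalIdealRing R] [AddCommGroup M] [Module R M] [Module.Free R M] [Module.Finite R M]
    (N : Submodule R M) {c : R} (hc : c ≠ 0) (hN : ∀ y, c • y ∈ N) :
    Nonempty (N ≃ₗ[R] M) := by
  refine FiniteDimensional.nonempty_linearEquiv_of_finrank_eq (N.finrank_le.antisymm ?_)
  let smul : M →ₗ[R] N := (c • LinearMap.id).codRestrict N hN
  refine LinearMap.finrank_le_finrank_of_injective (f := smul) fun y₁ y₂ h ↦ ?_
  exact smul_right_injective M hc (congrArg Subtype.val h)

theorem LinearMap.nonempty_ker_equiv_ker {R F G H : Type*} [CommRing R]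
    [AddCommGroup F] [Module R F] [AddCommGroup G] [Module R G] [AddCommGroup H] [Module R H]
    {i : F →ₗ[R] G} {π : G →ₗ[R] H} {c : R} {f : G →ₗ[R] F}
    {g : H →ₗ[R] F ⧸ range (c • (LinearMap.id : F →ₗ[R] F))}
    (hi : Function.Injective i) (hπ : Function.Surjective π) (hexact : range i = ker π)
    (hc : IsSMulRegular F c) (hif : ∀ x, i (f x) = c • x)
    (hg : ∀ x, g (π x) = Submodule.Quotient.mk (f x)) :
    Nonempty (ker f ≃ₗ[R] ker g) := by
  have hfi (y : F) : f (i y) = c • y := hi <| by rw [hif, map_smul]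
  have hπi (y : F) : π (i y) = 0 := by rw [← mem_ker, ← hexact]; exact ⟨y, rfl⟩
  have hmaps (x : G) (hx : x ∈ ker f) : π x ∈ ker g := by
    rw [mem_ker] at hx ⊢
    rw [hg, hx, Submodule.Quotient.mk_zero]
  refine ⟨.ofBijective (π.restrict hmaps) ⟨?_, ?_⟩⟩
  · rintro ⟨x₁, hx₁⟩ ⟨x₂, hx₂⟩ h
    obtain ⟨z, hz⟩ : x₁ - x₂ ∈ range i := by
      rw [hexact, mem_ker, map_sub, sub_eq_zero]
      exact congrArg Subtype.val h
    have hz0 : c • z = c • 0 := by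
      rw [← hfi, hz, map_sub, mem_ker.mp hx₁, mem_ker.mp hx₂, sub_self, smul_zero]
    rw [hc hz0, map_zero, eq_comm, sub_eq_zero] at hz
    exact Subtype.ext hz
  · rintro ⟨h, hh⟩
    obtain ⟨x, rfl⟩ := hπ h
    rw [mem_ker, hg, Submodule.Quotient.mk_eq_zero] at hh
    obtain ⟨z, hz⟩ := hh
    refine ⟨⟨x - i z, ?_⟩, Subtype.ext ?_⟩
    · rw [mem_ker, map_sub, hfi, ← hz]
      simp
    · simp [hπi]

theorem stmt_1_general (p : ℕ) [Fact p.Prime] (a n : ℕ) (G H : Type)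
    [AddCommGroup G] [Module ℤ_[p] G] [AddCommGroup H] [Module ℤ_[p] H]
    (i : (Fin a → ℤ_[p]) →ₗ[ℤ_[p]] G) (π : G →ₗ[ℤ_[p]] H)
    (hi : Function.Injective i) (hπ : Function.Surjective π)
    (hexact : LinearMap.range i = LinearMap.ker π)
    (htor : ∀ h : H, ((p : ℤ_[p]) ^ n) • h = 0)
    (g : H →ₗ[ℤ_[p]]
        ((Fin a → ℤ_[p]) ⧸ LinearMap.range
          (((p : ℤ_[p]) ^ n) • (LinearMap.id : (Fin a → ℤ_[p]) →ₗ[ℤ_[p]] (Fin a → ℤ_[p])))))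
    (hg : ∀ (x : G) (y : Fin a → ℤ_[p]), i y = ((p : ℤ_[p]) ^ n) • x →
      g (π x) = Submodule.Quotient.mk y) :
    Nonempty (G ≃ₗ[ℤ_[p]] ((Fin a → ℤ_[p]) × LinearMap.ker g)) := by
  have hc : (p : ℤ_[p]) ^ n ≠ 0 :=
    pow_ne_zero _ (Nat.cast_ne_zero.mpr (Fact.out : p.Prime).ne_zero)
  obtain ⟨f, hf⟩ := LinearMap.exists_comp_eq_of_range_le hi ((p : ℤ_[p]) ^ n • LinearMap.id) <| by
    rintro _ ⟨x, rfl⟩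
    rw [hexact, LinearMap.mem_ker, LinearMap.smul_apply, map_smul, htor]
  have hif (x : G) : i (f x) = (p : ℤ_[p]) ^ n • x := LinearMap.congr_fun hf x
  obtain ⟨eK⟩ := LinearMap.nonempty_ker_equiv_ker hi hπ hexact (.of_ne_zero hc) hif
    fun x ↦ hg x (f x) (hif x)
  obtain ⟨eR⟩ := (LinearMap.range f).nonempty_linearEquiv_of_smul_mem hc fun y ↦
    ⟨i y, hi <| by rw [hif, map_smul]⟩
  obtain ⟨eG⟩ := f.nonempty_equiv_ker_prod_range
  exact ⟨eG.trans ((eK.prodCongr eR).trans (LinearEquiv.prodComm _ _ _))⟩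

/-- Let `0 → ℤ_p^a →(i) G →(π) H → 0` be an exact sequence of `ℤ_p`-modules with `H`
finitely generated and killed by `p^n`, and let `g : H → ℤ_p^a / p^n ℤ_p^a` be the
`ℤ_p`-linear map with `g(π x) = p^n • x mod p^n ℤ_p^a`.  Then
`G ≅ ℤ_p^a ⊕ ker g` as `ℤ_p`-modules. -/
theorem stmt_1 (p : ℕ) [Fact p.Prime] (a n : ℕ) (G H : Type)
    [AddCommGroup G] [Module ℤ_[p] G] [AddCommGroup H] [Module ℤ_[p] H]
    (i : (Fin a → ℤ_[p]) →ₗ[ℤ_[p]] G) (π : G →ₗ[ℤ_[p]] H)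
    (hi : Function.Injective i) (hπ : Function.Surjective π)
    (hexact : LinearMap.range i = LinearMap.ker π)
    (hfg : Module.Finite ℤ_[p] H) (htor : ∀ h : H, ((p : ℤ_[p]) ^ n) • h = 0)
    (g : H →ₗ[ℤ_[p]]
        ((Fin a → ℤ_[p]) ⧸ LinearMap.range
          (((p : ℤ_[p]) ^ n) • (LinearMap.id : (Fin a → ℤ_[p]) →ₗ[ℤ_[p]] (Fin a → ℤ_[p])))))
    (hg : ∀ (x : G) (y : Fin a → ℤ_[p]), i y = ((p : ℤ_[p]) ^ n) • x →
      g (π x) = Submodule.Quotient.mk y) :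
    Nonempty (G ≃ₗ[ℤ_[p]] ((Fin a → ℤ_[p]) × LinearMap.ker g)) :=
  stmt_1_general p a n G H i π hi hπ hexact htor g hg
end

section
/- Let p be a prime, and 0 → ℤ_p^a → G → H → 0 an exact sequence of ℤ_p-modules with H finitely generated and p^n-torsion. With g : H → ℤ_p^a/p^nℤ_p^a as above, the kernel of g is isomorphic to the p^n-torsion submodule G[p^n] of G. -/
/-- Let `0 → ℤ_p^a →(i) G →(π) H → 0` be an exact sequence of `ℤ_p`-modules with `H`
finitely generated and killed by `p^n`, and let `g : H → ℤ_p^a / p^n ℤ_p^a` be the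
`ℤ_p`-linear map with `g(π x) = p^n • x mod p^n ℤ_p^a`.  Then `ker g` is isomorphic to
the `p^n`-torsion submodule `G[p^n] = ker (p^n • · : G → G)` of `G`. -/
theorem stmt_2 (p : ℕ) [Fact p.Prime] (a n : ℕ) (G H : Type)
    [AddCommGroup G] [Module ℤ_[p] G] [AddCommGroup H] [Module ℤ_[p] H]
    (i : (Fin a → ℤ_[p]) →ₗ[ℤ_[p]] G) (π : G →ₗ[ℤ_[p]] H)
    (hi : Function.Injective i) (hπ : Function.Surjective π)
    (hexact : LinearMap.range i = LinearMap.ker π)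
    (hfg : Module.Finite ℤ_[p] H) (htor : ∀ h : H, ((p : ℤ_[p]) ^ n) • h = 0)
    (g : H →ₗ[ℤ_[p]]
        ((Fin a → ℤ_[p]) ⧸ LinearMap.range
          (((p : ℤ_[p]) ^ n) • (LinearMap.id : (Fin a → ℤ_[p]) →ₗ[ℤ_[p]] (Fin a → ℤ_[p])))))
    (hg : ∀ (x : G) (y : Fin a → ℤ_[p]), i y = ((p : ℤ_[p]) ^ n) • x →
      g (π x) = Submodule.Quotient.mk y) :
    Nonempty (LinearMap.ker g ≃ₗ[ℤ_[p]]
      LinearMap.ker (((p : ℤ_[p]) ^ n) • (LinearMap.id : G →ₗ[ℤ_[p]] G))) := by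
  have hpn : ((p : ℤ_[p]) ^ n) ≠ 0 := by
    apply pow_ne_zero
    exact_mod_cast (Nat.cast_ne_zero (R := ℤ_[p])).mpr (Fact.out (p := p.Prime)).ne_zero
  -- membership characterization
  have hmemG : ∀ x : G, x ∈ LinearMap.ker (((p : ℤ_[p]) ^ n) •
      (LinearMap.id : G →ₗ[ℤ_[p]] G)) ↔ ((p : ℤ_[p]) ^ n) • x = 0 := by
    intro x
    simp [LinearMap.mem_ker]
  -- the map G[p^n] → ker g induced by π
  have hmaps : ∀ x ∈ LinearMap.ker (((p : ℤ_[p]) ^ n) •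
      (LinearMap.id : G →ₗ[ℤ_[p]] G)), π x ∈ LinearMap.ker g := by
    intro x hx
    rw [hmemG] at hx
    have h0 : i 0 = ((p : ℤ_[p]) ^ n) • x := by rw [map_zero, hx]
    have := hg x 0 h0
    simpa [LinearMap.mem_ker] using this
  set f := π.restrict hmaps with hf
  have hfinj : Function.Injective f := by
    intro x y hxy
    have h1 : π (x.1 - y.1) = 0 := by
      have : π x.1 = π y.1 := congrArg Subtype.val hxy
      simp [map_sub, this]
    have h2 : (x.1 - y.1) ∈ LinearMap.range i := by rw [hexact]; exact h1
    obtain ⟨z, hz⟩ := h2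
    have hx := (hmemG x.1).mp x.2
    have hy := (hmemG y.1).mp y.2
    have h3 : i (((p : ℤ_[p]) ^ n) • z) = 0 := by
      rw [map_smul, hz, smul_sub, hx, hy, sub_zero]
    have h4 : ((p : ℤ_[p]) ^ n) • z = 0 := by
      apply hi; rw [h3, map_zero]
    have h5 : z = 0 := by
      funext j
      have := congrFun h4 j
      simp only [Pi.smul_apply, smul_eq_mul, Pi.zero_apply] at this
      exact (mul_eq_zero.mp this).resolve_left hpn
    have : x.1 - y.1 = 0 := by rw [← hz, h5, map_zero]
    exact Subtype.ext (sub_eq_zero.mp this)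
  have hfsurj : Function.Surjective f := by
    rintro ⟨h, hh⟩
    obtain ⟨x, hx⟩ := hπ h
    have h1 : π (((p : ℤ_[p]) ^ n) • x) = 0 := by
      rw [map_smul, hx, htor]
    have h2 : (((p : ℤ_[p]) ^ n) • x) ∈ LinearMap.range i := by rw [hexact]; exact h1
    obtain ⟨y, hy⟩ := h2
    have h3 : g h = Submodule.Quotient.mk y := by rw [← hx]; exact hg x y hy
    have h5 : y ∈ LinearMap.range (((p : ℤ_[p]) ^ n) •
        (LinearMap.id : (Fin a → ℤ_[p]) →ₗ[ℤ_[p]] (Fin a → ℤ_[p]))) := by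
      have h4 : g h = 0 := hh
      rw [h3, Submodule.Quotient.mk_eq_zero] at h4
      exact h4
    obtain ⟨z, hz⟩ := h5
    have hz' : ((p : ℤ_[p]) ^ n) • z = y := by simpa using hz
    refine ⟨⟨x - i z, ?_⟩, ?_⟩
    · rw [hmemG]
      rw [smul_sub, ← map_smul, hz', hy, sub_self]
    · apply Subtype.ext
      have hiz : π (i z) = 0 := by
        have : i z ∈ LinearMap.ker π := by rw [← hexact]; exact ⟨z, rfl⟩
        exact this
      show π (x - i z) = h
      rw [map_sub, hiz, sub_zero, hx]
  exact ⟨(LinearEquiv.ofBijective f ⟨hfinj, hfsurj⟩).symm⟩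
end

section
/- The elliptic curve E : Y² + 7XY - 28Y = X³ + 7X - 35 over ℚ has a rational point (2, 1) of order 7. -/
/-!
Doubling `P = (2, 1)` and adding `P` twice more gives `2P = (-10, 85)`, `3P = (8, 13)` and
`4P = (8, -41)`. Since `-41` is the other root in `Y` over `X = 8`, we get `4P = -3P`, so `7P = 0`;
as `P ≠ 0` and `7` is prime, `P` has order exactly `7`.
-/

open WeierstrassCurve WeierstrassCurve.Affine

namespace WeierstrassCurve.Affine.Point

variable {F : Type*} [Field F] [DecidableEq F] {W : Affine F}

lemma some_add_some_of_X_ne {x₁ y₁ x₂ y₂ x₃ y₃ : F} {h₁ : W.Nonsingular x₁ y₁}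
    {h₂ : W.Nonsingular x₂ y₂} (h₃ : W.Nonsingular x₃ y₃) (hx : x₁ ≠ x₂)
    (hx₃ : W.addX x₁ x₂ ((y₁ - y₂) / (x₁ - x₂)) = x₃)
    (hy₃ : W.addY x₁ x₂ y₁ ((y₁ - y₂) / (x₁ - x₂)) = y₃) :
    some _ _ h₁ + some _ _ h₂ = some _ _ h₃ := by
  rw [add_of_X_ne hx, some.injEq, slope_of_X_ne hx]
  exact ⟨hx₃, hy₃⟩

lemma two_nsmul_some_of_Y_ne {x₁ y₁ x₃ y₃ : F} {h₁ : W.Nonsingular x₁ y₁}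
    (h₃ : W.Nonsingular x₃ y₃) (hy : y₁ ≠ W.negY x₁ y₁)
    (hx₃ : W.addX x₁ x₁
      ((3 * x₁ ^ 2 + 2 * W.a₂ * x₁ + W.a₄ - W.a₁ * y₁) / (y₁ - W.negY x₁ y₁)) = x₃)
    (hy₃ : W.addY x₁ x₁ y₁
      ((3 * x₁ ^ 2 + 2 * W.a₂ * x₁ + W.a₄ - W.a₁ * y₁) / (y₁ - W.negY x₁ y₁)) = y₃) :
    2 • some _ _ h₁ = some _ _ h₃ := by
  rw [two_nsmul, add_self_of_Y_ne hy, some.injEq, slope_of_Y_ne rfl hy]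
  exact ⟨hx₃, hy₃⟩

end WeierstrassCurve.Affine.Point

namespace SevenTorsionExample

open WeierstrassCurve.Affine.Point

def E : WeierstrassCurve ℚ := ⟨7, 0, -28, 7, -35⟩

lemma E_Δ_ne_zero : E.Δ ≠ 0 := by
  norm_num [E, WeierstrassCurve.Δ, WeierstrassCurve.b₂, WeierstrassCurve.b₄,
    WeierstrassCurve.b₆, WeierstrassCurve.b₈]

lemma nonsingular_of_equation {x y : ℚ} (h : y ^ 2 + 7 * x * y - 28 * y = x ^ 3 + 7 * x - 35) :
    E.toAffine.Nonsingular x y :=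
  (equation_iff_nonsingular_of_Δ_ne_zero E_Δ_ne_zero).mp <| by
    rw [equation_iff]; simp only [E]; linear_combination h

lemma nonsingular_two_one : E.toAffine.Nonsingular 2 1 := nonsingular_of_equation (by norm_num)

def P : E.toAffine.Point := some 2 1 nonsingular_two_one

lemma two_nsmul_P : 2 • P = some (-10) 85 (nonsingular_of_equation (by norm_num)) :=
  two_nsmul_some_of_Y_ne _ (by norm_num [E, negY]) (by norm_num [E, negY, addX])
    (by norm_num [E, negY, addX, addY, negAddY])

lemma three_nsmul_P : 3 • P = some 8 13 (nonsingular_of_equation (by norm_num)) := by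
  rw [succ_nsmul, two_nsmul_P, P]
  exact some_add_some_of_X_ne _ (by norm_num) (by norm_num [E, addX])
    (by norm_num [E, negY, addX, addY, negAddY])

lemma four_nsmul_P : 4 • P = some 8 (-41) (nonsingular_of_equation (by norm_num)) := by
  rw [succ_nsmul, three_nsmul_P, P]
  exact some_add_some_of_X_ne _ (by norm_num) (by norm_num [E, addX])
    (by norm_num [E, negY, addX, addY, negAddY])

lemma seven_nsmul_P : 7 • P = 0 := by
  rw [show 7 = 4 + 3 from rfl, add_nsmul, four_nsmul_P, three_nsmul_P]
  exact add_of_Y_eq rfl (by norm_num [E, negY])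

lemma addOrderOf_P : addOrderOf P = 7 :=
  have : Fact (Nat.Prime 7) := ⟨by norm_num⟩
  addOrderOf_eq_prime seven_nsmul_P (some_ne_zero _)

end SevenTorsionExample

/-- The elliptic curve `Y² + 7XY - 28Y = X³ + 7X - 35` over `ℚ` (so `a₁ = 7`, `a₂ = 0`,
`a₃ = -28`, `a₄ = 7`, `a₆ = -35`) has the rational point `(2, 1)`, which has order 7. -/
theorem stmt_10 (W : WeierstrassCurve ℚ) (hW : W = ⟨7, 0, -28, 7, -35⟩) :
    ∃ h : W.toAffine.Nonsingular 2 1,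
      addOrderOf (WeierstrassCurve.Affine.Point.some _ _ h) = 7 := by
  subst hW
  exact ⟨SevenTorsionExample.nonsingular_two_one, SevenTorsionExample.addOrderOf_P⟩
end
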